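/- Let D be an n×n symmetric matrix with zero diagonal, and let J = I - (1/n)ee^T be the orthogonal projection onto the orthogonal complement of the all-ones vector e. Then D is a Euclidean distance matrix (i.e., there exist points p^1,...,p^n in some R^k with D_ij = ||p^i - p^j||^2) with embedding dimension r if and only if -½ J D J is positive semidefinite of rank r. -/

import Mathlib

/-!
The maps `G ↦ (G i i + G j j - 2 G i j)` and `D ↦ -½ J D J` are inverse to each other between
matrices with vanishing row and column sums and symmetric matrices with zero diagonal.
Translating a configuration so that its centroid is `0` does not change its distances, and the
Gram matrix of the centred points has vanishing row sums, so `-½ J D J` is that Gram matrix: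
positive semidefinite, of rank the dimension of the span of the centred points, which is the
affine dimension of the configuration. Conversely, a factorisation `-½ J D J = Bᴴ B` yields points
(the columns of `B`) with this Gram matrix; their squared distances give back `D`, and their
centroid is `0` because `J e = 0`.
-/

open Matrix Finset

section Centering

variable {ι : Type*} [Fintype ι] [DecidableEq ι]

noncomputable def centeringMatrix (ι : Type*) [Fintype ι] [DecidableEq ι] : Matrix ι ι ℝ :=
  1 - (Fintype.card ι : ℝ)⁻¹ • of fun _ _ => 1

lemma mul_centeringMatrix_apply (A : Matrix ι ι ℝ) (i j : ι) :
    (A * centeringMatrix ι) i j = A i j - (Fintype.card ι : ℝ)⁻¹ * ∑ k, A i k := by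
  rw [centeringMatrix, mul_sub, mul_one, Matrix.mul_smul, Matrix.sub_apply, Matrix.smul_apply,
    mul_apply]
  simp

lemma centeringMatrix_mul_apply (A : Matrix ι ι ℝ) (i j : ι) :
    (centeringMatrix ι * A) i j = A i j - (Fintype.card ι : ℝ)⁻¹ * ∑ k, A k j := by
  rw [centeringMatrix, sub_mul, one_mul, Matrix.smul_mul, Matrix.sub_apply, Matrix.smul_apply,
    mul_apply]
  simp

lemma centeringMatrix_mulVec_one : centeringMatrix ι *ᵥ 1 = 0 := by
  ext i
  have : (Fintype.card ι : ℝ) ≠ 0 := Nat.cast_ne_zero.2 (Fintype.card_pos_iff.2 ⟨i⟩).ne'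
  rw [centeringMatrix, sub_mulVec, one_mulVec, smul_mulVec]
  simp [mulVec, dotProduct, this]

lemma centeringMatrix_mul_mul_centeringMatrix_apply (A : Matrix ι ι ℝ) (i j : ι) :
    (centeringMatrix ι * A * centeringMatrix ι) i j =
      A i j - (Fintype.card ι : ℝ)⁻¹ * ∑ k, A i k - (Fintype.card ι : ℝ)⁻¹ * ∑ k, A k j
        + (Fintype.card ι : ℝ)⁻¹ * (Fintype.card ι : ℝ)⁻¹ * ∑ k, ∑ l, A k l := by
  simp only [mul_centeringMatrix_apply, centeringMatrix_mul_apply, sum_sub_distrib, ← mul_sum]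
  rw [sum_comm]
  ring

end Centering

section Centroid

variable {ι V : Type*} [Fintype ι] [AddCommGroup V] [Module ℝ V]

noncomputable def centered (p : ι → V) (i : ι) : V := p i - (Fintype.card ι : ℝ)⁻¹ • ∑ j, p j

lemma centered_sub_centered (p : ι → V) (i j : ι) : centered p i - centered p j = p i - p j := by
  simp [centered]

lemma sum_centered (p : ι → V) : ∑ i, centered p i = 0 := by
  rcases isEmpty_or_nonempty ι with hι | hι
  · simp
  have : (Fintype.card ι : ℝ) ≠ 0 := Nat.cast_ne_zero.2 Fintype.card_ne_zero
  simp [centered, sum_sub_distrib, ← Nat.cast_smul_eq_nsmul ℝ, smul_smul, this]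

lemma centered_eq_self {p : ι → V} (h : ∑ i, p i = 0) : centered p = p := by
  ext i; simp [centered, h]

lemma vectorSpan_range_eq_span_range_centered (p : ι → V) :
    vectorSpan ℝ (Set.range p) = Submodule.span ℝ (Set.range (centered p)) := by
  apply le_antisymm
  · rw [vectorSpan_def, Submodule.span_le]
    rintro _ ⟨_, ⟨i, rfl⟩, _, ⟨j, rfl⟩, rfl⟩
    change p i - p j ∈ Submodule.span ℝ _
    rw [← centered_sub_centered]
    exact sub_mem (Submodule.subset_span ⟨i, rfl⟩) (Submodule.subset_span ⟨j, rfl⟩)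
  · rw [Submodule.span_le]
    rintro _ ⟨i, rfl⟩
    have : (Fintype.card ι : ℝ) ≠ 0 := Nat.cast_ne_zero.2 (Fintype.card_pos_iff.2 ⟨i⟩).ne'
    have hi : centered p i = (Fintype.card ι : ℝ)⁻¹ • ∑ j, (p i - p j) := by
      rw [sum_sub_distrib, smul_sub, sum_const, card_univ, ← Nat.cast_smul_eq_nsmul ℝ, smul_smul,
        inv_mul_cancel₀ this, one_smul, centered]
    rw [SetLike.mem_coe, hi]
    exact Submodule.smul_mem _ _ (Submodule.sum_mem _ fun j _ =>
      vsub_mem_vectorSpan ℝ ⟨i, rfl⟩ ⟨j, rfl⟩)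

end Centroid

section Gram

open Module Submodule
open scoped ComplexOrder

variable {ι E : Type*} [Fintype ι] [NormedAddCommGroup E]

lemma sum_eq_zero_of_gram_mulVec_one [InnerProductSpace ℝ E] {v : ι → E}
    (h : gram ℝ v *ᵥ 1 = 0) : ∑ i, v i = 0 := by
  rw [← inner_self_eq_zero (𝕜 := ℝ), sum_inner]
  refine sum_eq_zero fun i _ => ?_
  simpa [inner_sum, mulVec, dotProduct] using congrFun h i

variable {𝕜 : Type*} [RCLike 𝕜] [InnerProductSpace 𝕜 E]

lemma Matrix.rank_gram [FiniteDimensional 𝕜 E] (v : ι → E) :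
    (gram 𝕜 v).rank = finrank 𝕜 (span 𝕜 (Set.range v)) := by
  let b := stdOrthonormalBasis 𝕜 E
  rw [gram_eq_conjTranspose_mul b, rank_conjTranspose_mul_self, rank_eq_finrank_span_cols,
    ← LinearEquiv.finrank_map_eq (b.repr.toLinearEquiv.trans (WithLp.linearEquiv 2 𝕜 _)),
    map_span, ← Set.range_comp]
  rfl

lemma Matrix.PosSemidef.exists_gram_eq {M : Matrix ι ι 𝕜} (hM : M.PosSemidef) :
    ∃ v : ι → EuclideanSpace 𝕜 ι, gram 𝕜 v = M := by
  classical
  open scoped MatrixOrder in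
  obtain ⟨B, rfl⟩ := CStarAlgebra.nonneg_iff_eq_star_mul_self.mp hM.nonneg
  refine ⟨fun i => WithLp.toLp 2 (B.col i), ?_⟩
  ext i j
  simp [gram_apply, mul_apply, PiLp.inner_apply, mul_comm]

end Gram

section Schoenberg

variable {ι : Type*}

def distOfGram (G : Matrix ι ι ℝ) : Matrix ι ι ℝ := of fun i j => G i i + G j j - 2 * G i j

lemma distOfGram_gram {E : Type*} [NormedAddCommGroup E] [InnerProductSpace ℝ E] (v : ι → E) :
    distOfGram (gram ℝ v) = of fun i j => ‖v i - v j‖ ^ 2 := by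
  ext i j
  simp only [distOfGram, of_apply, gram_apply, real_inner_self_eq_norm_sq, norm_sub_sq_real]
  ring

variable [Fintype ι] [DecidableEq ι]

lemma neg_half_smul_centeringMatrix_mul_distOfGram_mul {G : Matrix ι ι ℝ}
    (hrow : ∀ i, ∑ j, G i j = 0) (hcol : ∀ j, ∑ i, G i j = 0) :
    (-(1/2) : ℝ) • (centeringMatrix ι * distOfGram G * centeringMatrix ι) = G := by
  ext i j
  have : (Fintype.card ι : ℝ) ≠ 0 := Nat.cast_ne_zero.2 (Fintype.card_pos_iff.2 ⟨i⟩).ne'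
  simp only [Matrix.smul_apply, smul_eq_mul, centeringMatrix_mul_mul_centeringMatrix_apply,
    distOfGram, of_apply, sum_add_distrib, sum_sub_distrib, ← mul_sum, sum_const, card_univ,
    nsmul_eq_mul, hrow, hcol]
  field_simp
  ring

lemma distOfGram_neg_half_smul_centeringMatrix_mul_mul {D : Matrix ι ι ℝ} (hD : D.IsSymm)
    (hdiag : ∀ i, D i i = 0) :
    distOfGram ((-(1/2) : ℝ) • (centeringMatrix ι * D * centeringMatrix ι)) = D := by
  ext i j
  have hcol (j : ι) : ∑ k, D k j = ∑ k, D j k := sum_congr rfl fun k _ => hD.apply j k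
  simp only [distOfGram, of_apply, Matrix.smul_apply, smul_eq_mul,
    centeringMatrix_mul_mul_centeringMatrix_apply, hcol, hdiag]
  ring

end Schoenberg

theorem stmt0 (n r : ℕ) (D : Matrix (Fin n) (Fin n) ℝ)
    (hsym : D.IsSymm) (hdiag : ∀ i, D i i = 0)
    (J : Matrix (Fin n) (Fin n) ℝ)
    (hJ : J = 1 - (n : ℝ)⁻¹ • Matrix.of (fun _ _ => (1 : ℝ))) :
    (∃ (k : ℕ) (p : Fin n → EuclideanSpace ℝ (Fin k)),
        (∀ i j, D i j = dist (p i) (p j) ^ 2) ∧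
        Module.finrank ℝ (vectorSpan ℝ (Set.range p)) = r) ↔
      (((-(1/2) : ℝ) • (J * D * J)).PosSemidef ∧
        ((-(1/2) : ℝ) • (J * D * J)).rank = r) := by
  obtain rfl : J = centeringMatrix (Fin n) := by rw [hJ, centeringMatrix, Fintype.card_fin]
  constructor
  · rintro ⟨k, p, hD, rfl⟩
    have hsum := sum_centered p
    have hDG : D = distOfGram (gram ℝ (centered p)) := by
      ext i j
      rw [hD, distOfGram_gram, of_apply, centered_sub_centered, dist_eq_norm]
    rw [hDG, neg_half_smul_centeringMatrix_mul_distOfGram_mul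
      (fun i => by simp only [gram_apply, ← inner_sum, hsum, inner_zero_right])
      (fun j => by simp only [gram_apply, ← sum_inner, hsum, inner_zero_left])]
    exact ⟨posSemidef_gram ℝ _, by rw [rank_gram, vectorSpan_range_eq_span_range_centered]⟩
  · rintro ⟨hpsd, rfl⟩
    obtain ⟨p, hp⟩ := hpsd.exists_gram_eq
    have hsum : ∑ i, p i = 0 := sum_eq_zero_of_gram_mulVec_one <| by
      rw [hp, smul_mulVec, ← mulVec_mulVec, centeringMatrix_mulVec_one, mulVec_zero, smul_zero]
    refine ⟨n, p, fun i j => ?_, ?_⟩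
    · rw [← distOfGram_neg_half_smul_centeringMatrix_mul_mul hsym hdiag, ← hp, distOfGram_gram,
        of_apply, dist_eq_norm]
    · rw [vectorSpan_range_eq_span_range_centered, centered_eq_self hsum, ← rank_gram, hp]
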